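/- Let V be a finite set with |V| = n ≥ 2, let S ⊆ V with |S| = k where 1 ≤ k ≤ n, and let 0 ≤ j ≤ n − k. Let (Y_s)_{s ∈ S} be mutually independent random variables where Y_s is uniformly distributed on V \ {s}. Then the probability that exactly j elements outside S are hit is P(|{Y_s : s ∈ S} \ S| = j) = (n−1)^{−k} · ∑_{ℓ=j}^{k} C(k,ℓ)·C(n−k, j)·Surj(ℓ, j)·(k−1)^{k−ℓ}, where Surj(ℓ, j) denotes the number of surjective functions from a set of size ℓ onto a set of size j. -/

import Mathlib

open MeasureTheory ProbabilityTheory Finset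
open scoped ENNReal

/-- `Surj ℓ j` is the number of surjective functions from `Fin ℓ` onto `Fin j`
(equal to `j!` times the Stirling number of the second kind `S(ℓ, j)`). -/
def Surj (ℓ j : ℕ) : ℕ :=
  Fintype.card {g : Fin ℓ → Fin j // Function.Surjective g}



lemma Surj_eq_zero {ℓ j : ℕ} (h : ℓ < j) : Surj ℓ j = 0 := by
  rw [Surj, Fintype.card_eq_zero_iff]
  constructor
  rintro ⟨g, hg⟩
  have := Fintype.card_le_of_surjective g hg
  simp only [Fintype.card_fin] at this
  omega

def surjCongr {α β α' β' : Type*} (e : α ≃ α') (e' : β ≃ β') :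
    {g : α → β // Function.Surjective g} ≃ {g' : α' → β' // Function.Surjective g'} :=
  Equiv.subtypeEquiv (e.arrowCongr e') fun g => by
    simp [Equiv.arrowCongr, EquivLike.comp_surjective, EquivLike.surjective_comp,
      Function.comp_assoc]

lemma card_surj (α β : Type*) [Fintype α] [Fintype β] [DecidableEq α] [DecidableEq β] :
    Fintype.card {g : α → β // Function.Surjective g}
      = Surj (Fintype.card α) (Fintype.card β) :=
  Fintype.card_congr (surjCongr (Fintype.equivFin α) (Fintype.equivFin β))

def splitEquiv {γ : Type*} (p : γ → Prop) [DecidablePred p] (V : Type*) :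
    (γ → V) ≃ ({x // p x} → V) × ({x // ¬ p x} → V) where
  toFun f := (fun a => f a, fun b => f b)
  invFun gh x := if h : p x then gh.1 ⟨x, h⟩ else gh.2 ⟨x, h⟩
  left_inv f := funext fun x => by by_cases h : p x <;> simp [h]
  right_inv gh := by
    obtain ⟨g, h⟩ := gh
    refine Prod.ext ?_ ?_ <;> funext a
    · simp [a.2]
    · simp [a.2]

def surjFactorEquiv {α V : Type*} (T : Finset V) :
    {g : α → V // (∀ a, g a ∈ T) ∧ ∀ t ∈ T, ∃ a, g a = t}
      ≃ {g : α → ↥T // Function.Surjective g} where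
  toFun g := ⟨fun a => ⟨g.1 a, g.2.1 a⟩, fun t => by
    obtain ⟨a, ha⟩ := g.2.2 t.1 t.2
    exact ⟨a, Subtype.ext ha⟩⟩
  invFun g := ⟨fun a => (g.1 a : V), fun a => (g.1 a).2, fun t ht => by
    obtain ⟨a, ha⟩ := g.2 ⟨t, ht⟩
    exact ⟨a, congrArg Subtype.val ha⟩⟩
  left_inv g := rfl
  right_inv g := rfl

lemma fiber_card {V : Type} [Fintype V] [DecidableEq V] (S : Finset V)
    (A : Finset ↥S) (T : Finset V) :
    (univ.filter (fun f : ↥S → V =>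
        (∀ a : ↥S, a ∈ A → f a ∈ T) ∧ (∀ t ∈ T, ∃ a, a ∈ A ∧ f a = t)
          ∧ (∀ s : ↥S, ¬ s ∈ A → f s ∈ S.erase ↑s))).card
      = Surj A.card T.card * (S.card - 1) ^ (S.card - A.card) := by
  classical
  rw [← Fintype.card_subtype]
  have e1 : {f : ↥S → V // (∀ a : ↥S, a ∈ A → f a ∈ T) ∧ (∀ t ∈ T, ∃ a, a ∈ A ∧ f a = t)
          ∧ (∀ s : ↥S, ¬ s ∈ A → f s ∈ S.erase ↑s)}
      ≃ {g : {s : ↥S // s ∈ A} → V // (∀ a, g a ∈ T) ∧ ∀ t ∈ T, ∃ a, g a = t}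
        × {h : {s : ↥S // ¬ s ∈ A} → V // ∀ c, h c ∈ S.erase ↑↑c} := by
    refine (Equiv.subtypeEquiv (splitEquiv (fun s : ↥S => s ∈ A) V) ?_).trans
      Equiv.subtypeProdEquivProd
    intro f
    constructor
    · rintro ⟨h1, h2, h3⟩
      exact ⟨⟨fun a => h1 a a.2, fun t ht => by
        obtain ⟨a, ha, hfa⟩ := h2 t ht; exact ⟨⟨a, ha⟩, hfa⟩⟩,
        fun c => h3 c c.2⟩
    · rintro ⟨⟨h1, h2⟩, h3⟩
      refine ⟨fun a ha => h1 ⟨a, ha⟩, fun t ht => ?_, fun s hs => h3 ⟨s, hs⟩⟩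
      obtain ⟨a, hfa⟩ := h2 t ht
      exact ⟨a, a.2, hfa⟩
  rw [Fintype.card_congr e1, Fintype.card_prod]
  congr 1
  · rw [Fintype.card_congr (surjFactorEquiv T), card_surj]
    congr 1
    · simp [Fintype.card_subtype, filter_mem_eq_inter]
      rw [inter_eq_right.mpr (fun x _ => mem_attach S x)]
    · simp [Fintype.card_coe]
  · rw [Fintype.card_congr (Equiv.subtypePiEquivPi), Fintype.card_pi]
    have h2 : ∀ c : {s : ↥S // ¬ s ∈ A}, Fintype.card ↥(S.erase ↑↑c) = S.card - 1 := by
      intro c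
      rw [Fintype.card_coe, Finset.card_erase_of_mem c.1.2]
    rw [Finset.prod_congr rfl (fun c _ => h2 c), Finset.prod_const, Finset.card_univ,
      Fintype.card_subtype_compl]
    congr 2
    · simp [Fintype.card_coe]
    · simp [Fintype.card_subtype, filter_mem_eq_inter]
      rw [inter_eq_right.mpr (fun x _ => mem_attach S x)]

lemma count_main {V : Type} [Fintype V] [DecidableEq V] (S : Finset V) (n k j : ℕ)
    (hV : Fintype.card V = n) (hS : S.card = k) :
    (univ.filter (fun f : ↥S → V =>
        (∀ s : ↥S, f s ≠ ↑s) ∧ ((univ.image f) \ S).card = j)).card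
      = ∑ ℓ ∈ Icc j k, k.choose ℓ * (n - k).choose j * Surj ℓ j * (k - 1) ^ (k - ℓ) := by
  classical
  have H : ∀ f ∈ univ.filter (fun f : ↥S → V =>
      (∀ s : ↥S, f s ≠ ↑s) ∧ ((univ.image f) \ S).card = j),
      (univ.filter (fun s : ↥S => f s ∉ S), univ.image f \ S)
        ∈ univ.powerset ×ˢ (univ \ S).powersetCard j := by
    intro f hf
    simp only [mem_filter, mem_univ, true_and] at hf
    rw [Finset.mem_product, Finset.mem_powerset, Finset.mem_powersetCard]
    exact ⟨subset_univ _, ⟨sdiff_subset_sdiff (subset_univ _) le_rfl, hf.2⟩⟩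
  rw [Finset.card_eq_sum_card_fiberwise H, Finset.sum_product]
  have hfib : ∀ A ∈ (univ : Finset ↥S).powerset, ∀ T ∈ (univ \ S).powersetCard j,
      ((univ.filter (fun f : ↥S → V =>
          (∀ s : ↥S, f s ≠ ↑s) ∧ ((univ.image f) \ S).card = j)).filter
        (fun f => (univ.filter (fun s : ↥S => f s ∉ S), univ.image f \ S) = (A, T))).card
        = Surj A.card j * (S.card - 1) ^ (S.card - A.card) := by
    intro A _ T hT
    rw [Finset.mem_powersetCard] at hT
    obtain ⟨hTsub, hTcard⟩ := hT
    rw [Finset.filter_filter]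
    have hset : (univ.filter (fun f : ↥S → V =>
        ((∀ s : ↥S, f s ≠ ↑s) ∧ ((univ.image f) \ S).card = j)
          ∧ (univ.filter (fun s : ↥S => f s ∉ S), univ.image f \ S) = (A, T)))
        = univ.filter (fun f : ↥S → V =>
            (∀ a : ↥S, a ∈ A → f a ∈ T) ∧ (∀ t ∈ T, ∃ a, a ∈ A ∧ f a = t)
              ∧ (∀ s : ↥S, ¬ s ∈ A → f s ∈ S.erase ↑s)) := by
      apply Finset.filter_congr
      intro f _
      rw [Prod.mk.injEq]
      constructor
      · rintro ⟨⟨hfix, _⟩, hA, hTe⟩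
        refine ⟨?_, ?_, ?_⟩
        · intro a ha
          rw [← hA] at ha
          rw [mem_filter] at ha
          rw [← hTe, mem_sdiff]
          exact ⟨mem_image_of_mem f (mem_univ a), ha.2⟩
        · intro t ht
          rw [← hTe, mem_sdiff, mem_image] at ht
          obtain ⟨⟨a, _, hfa⟩, htS⟩ := ht
          refine ⟨a, ?_, hfa⟩
          rw [← hA, mem_filter]
          exact ⟨mem_univ a, by rw [hfa]; exact htS⟩
        · intro s hs
          rw [← hA, mem_filter] at hs
          push_neg at hs
          exact mem_erase.mpr ⟨hfix s, hs (mem_univ s)⟩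
      · rintro ⟨h1, h2, h3⟩
        have hTS : ∀ t ∈ T, t ∉ S := fun t ht => (mem_sdiff.mp (hTsub ht)).2
        have hfix : ∀ s : ↥S, f s ≠ ↑s := by
          intro s
          by_cases hs : s ∈ A
          · intro hc
            exact hTS _ (h1 s hs) (hc ▸ s.2)
          · exact (mem_erase.mp (h3 s hs)).1
        have hA : univ.filter (fun s : ↥S => f s ∉ S) = A := by
          ext s
          simp only [mem_filter, mem_univ, true_and]
          constructor
          · intro hfs
            by_contra hs
            exact hfs (mem_of_mem_erase (h3 s hs))
          · intro hs
            exact hTS _ (h1 s hs)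
        have hTe : univ.image f \ S = T := by
          ext t
          rw [mem_sdiff, mem_image]
          constructor
          · rintro ⟨⟨a, _, hfa⟩, htS⟩
            have ha : a ∈ A := by
              by_contra hc
              exact htS (hfa ▸ mem_of_mem_erase (h3 a hc))
            exact hfa ▸ h1 a ha
          · intro ht
            obtain ⟨a, ha, hfa⟩ := h2 t ht
            exact ⟨⟨a, mem_univ a, hfa⟩, hTS t ht⟩
        exact ⟨⟨hfix, by rw [hTe, hTcard]⟩, hA, hTe⟩
    rw [hset, fiber_card, hTcard]
  rw [Finset.sum_congr rfl (fun A hA => Finset.sum_congr rfl (fun T hT => hfib A hA T hT))]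
  have hcardU : (univ \ S).card = n - k := by
    rw [Finset.card_sdiff_of_subset (subset_univ S), Finset.card_univ, hV, hS]
  rw [Finset.sum_congr rfl (fun A _ => by
    rw [Finset.sum_const, Finset.card_powersetCard, hcardU])]
  rw [Finset.sum_powerset_apply_card
    (fun m => (n - k).choose j • (Surj m j * (S.card - 1) ^ (S.card - m)))]
  rw [Finset.card_univ, Fintype.card_coe, hS]
  have hsub : Icc j k ⊆ range (k + 1) := by
    intro ℓ hℓ
    rw [mem_Icc] at hℓ
    rw [mem_range]
    omega
  rw [← Finset.sum_subset hsub (by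
    intro ℓ hℓ hℓ'
    rw [mem_range] at hℓ
    rw [mem_Icc] at hℓ'
    have : ℓ < j := by omega
    rw [Surj_eq_zero this]
    simp)]
  refine Finset.sum_congr rfl fun ℓ hℓ => ?_
  rw [smul_eq_mul, smul_eq_mul]
  ring

/-- Let `|V| = n ≥ 2`, `S ⊆ V` with `|S| = k`, `1 ≤ k ≤ n`,
`0 ≤ j ≤ n - k`, and let `(Y s)_{s ∈ S}` be independent random variables with `Y s`
uniform on `V \ {s}` (one step of the `k` awake frogs on `K_n`). Then the probability
that exactly `j` vertices outside `S` are hit is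
`P(|{Y s : s ∈ S} \ S| = j) = (n-1)^(-k) * ∑_{ℓ=j}^{k} C(k,ℓ) C(n-k,j) Surj(ℓ,j) (k-1)^(k-ℓ)`. -/
theorem frog_model_transition_probability
    (V : Type) [Fintype V] [DecidableEq V] [MeasurableSpace V] [MeasurableSingletonClass V]
    (n : ℕ) (hV : Fintype.card V = n) (hn : 2 ≤ n)
    (S : Finset V) (k : ℕ) (hS : S.card = k) (hk1 : 1 ≤ k) (hkn : k ≤ n)
    (j : ℕ) (hj : j ≤ n - k)
    (Ω : Type) (_ : MeasurableSpace Ω) (μ : Measure Ω) [IsProbabilityMeasure μ]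
    (Y : S → Ω → V)
    (hYmeas : ∀ s, Measurable (Y s))
    (hYunif : ∀ s : S, ∀ v : V, v ≠ (s : V) →
        μ {ω | Y s ω = v} = (((n : ℝ≥0∞) - 1))⁻¹)
    (hYindep : iIndepFun Y μ) :
    μ {ω | ((Finset.univ.image fun s => Y s ω) \ S).card = j}
      = ENNReal.ofReal ((((n : ℝ) - 1) ^ k)⁻¹
          * ∑ ℓ ∈ Finset.Icc j k,
              (k.choose ℓ : ℝ) * ((n - k).choose j : ℝ) * (Surj ℓ j : ℝ)
                * ((k : ℝ) - 1) ^ (k - ℓ)) := by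
  classical
  set m : ℕ := n - 1 with hm
  have hmE : ((n : ℝ≥0∞) - 1) = (m : ℝ≥0∞) := by
    rw [hm, ENNReal.natCast_sub, Nat.cast_one]
  have hmne0 : (m : ℝ≥0∞) ≠ 0 := by
    simp only [ne_eq, Nat.cast_eq_zero]; omega
  have hmtop : (m : ℝ≥0∞) ≠ ⊤ := ENNReal.natCast_ne_top m
  -- zero probability of staying put
  have hzero : ∀ s : S, μ (Y s ⁻¹' {(s : V)}) = 0 := by
    intro s
    have hdisj : Set.PairwiseDisjoint (↑(univ : Finset V))
        (fun v => Y s ⁻¹' {v}) := by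
      intro v _ w _ hvw
      rw [Function.onFun, Set.disjoint_left]
      rintro ω h1 h2
      exact hvw ((Set.mem_preimage.mp h1).symm.trans (Set.mem_preimage.mp h2))
    have hsum : μ (⋃ v ∈ (univ : Finset V), Y s ⁻¹' {v})
        = ∑ v ∈ (univ : Finset V), μ (Y s ⁻¹' {v}) :=
      measure_biUnion_finset hdisj (fun v _ => (hYmeas s) (measurableSet_singleton v))
    have huniv : (⋃ v ∈ (univ : Finset V), Y s ⁻¹' {v}) = Set.univ := by
      ext ω; simp
    rw [huniv, measure_univ] at hsum
    rw [← Finset.add_sum_erase _ _ (mem_univ (s : V))] at hsum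
    have herase : ∀ v ∈ (univ : Finset V).erase (s : V), μ (Y s ⁻¹' {v}) = (m : ℝ≥0∞)⁻¹ := by
      intro v hv
      rw [show Y s ⁻¹' {v} = {ω | Y s ω = v} from rfl, hYunif s v (mem_erase.mp hv).1, hmE]
    rw [Finset.sum_congr rfl herase, Finset.sum_const, Finset.card_erase_of_mem (mem_univ _),
      Finset.card_univ, hV, nsmul_eq_mul, ← hm, ENNReal.mul_inv_cancel hmne0 hmtop] at hsum
    refine (ENNReal.add_left_inj ENNReal.one_ne_top).mp ?_
    rw [zero_add]
    exact hsum.symm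
  -- product formula
  have hBset : ∀ f : S → V, {ω | (fun s => Y s ω) = f} = ⋂ s : S, Y s ⁻¹' {f s} := by
    intro f
    ext ω
    simp [funext_iff]
  have hprod : ∀ f : S → V, μ {ω | (fun s => Y s ω) = f} = ∏ s : S, μ (Y s ⁻¹' {f s}) := by
    intro f
    rw [hBset f]
    exact hYindep.meas_iInter (fun s => ⟨{f s}, measurableSet_singleton _, rfl⟩)
  -- decompose event
  have hE : {ω | ((Finset.univ.image fun s => Y s ω) \ S).card = j}
      = ⋃ f ∈ univ.filter (fun f : S → V => ((univ.image f) \ S).card = j),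
          {ω | (fun s => Y s ω) = f} := by
    ext ω
    simp only [Set.mem_setOf_eq, Set.mem_iUnion, Finset.mem_filter, Finset.mem_univ, true_and]
    constructor
    · intro h
      exact ⟨fun s => Y s ω, h, rfl⟩
    · rintro ⟨f, hf, hfe⟩
      rw [← hfe] at hf
      exact hf
  have hdisj2 : Set.PairwiseDisjoint
      (↑(univ.filter (fun f : S → V => ((univ.image f) \ S).card = j)))
      (fun f => {ω | (fun s => Y s ω) = f}) := by
    intro f _ g _ hfg
    rw [Function.onFun, Set.disjoint_left]
    rintro ω h1 h2
    exact hfg (((h1 : (fun s => Y s ω) = f)).symm.trans (h2 : (fun s => Y s ω) = g))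
  have hmeas2 : ∀ f ∈ univ.filter (fun f : S → V => ((univ.image f) \ S).card = j),
      MeasurableSet {ω | (fun s => Y s ω) = f} := by
    intro f _
    rw [hBset f]
    exact MeasurableSet.iInter (fun s => (hYmeas s) (measurableSet_singleton _))
  rw [hE, measure_biUnion_finset hdisj2 hmeas2]
  -- drop functions with fixed points
  have hsub : univ.filter (fun f : S → V =>
        (∀ s : S, f s ≠ ↑s) ∧ ((univ.image f) \ S).card = j)
      ⊆ univ.filter (fun f : S → V => ((univ.image f) \ S).card = j) := by
    intro f hf
    simp only [mem_filter, mem_univ, true_and] at hf ⊢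
    exact hf.2
  rw [← Finset.sum_subset hsub (by
    intro f hf hf'
    simp only [mem_filter, mem_univ, true_and] at hf hf'
    have hne : ¬ ∀ s : S, f s ≠ ↑s := fun hA => hf' ⟨hA, hf⟩
    push_neg at hne
    obtain ⟨s₀, hs₀⟩ := hne
    rw [hprod f]
    exact Finset.prod_eq_zero (mem_univ s₀) (by rw [hs₀]; exact hzero s₀))]
  -- evaluate each term
  have hval : ∀ f ∈ univ.filter (fun f : S → V =>
      (∀ s : S, f s ≠ ↑s) ∧ ((univ.image f) \ S).card = j),
      μ {ω | (fun s => Y s ω) = f} = ((m : ℝ≥0∞)⁻¹) ^ k := by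
    intro f hf
    simp only [mem_filter, mem_univ, true_and] at hf
    rw [hprod f]
    have : ∀ s : S, μ (Y s ⁻¹' {f s}) = (m : ℝ≥0∞)⁻¹ := by
      intro s
      rw [show Y s ⁻¹' {f s} = {ω | Y s ω = f s} from rfl, hYunif s (f s) (hf.1 s), hmE]
    rw [Finset.prod_congr rfl (fun s _ => this s), Finset.prod_const, Finset.card_univ,
      Fintype.card_coe, hS]
  rw [Finset.sum_congr rfl hval, Finset.sum_const, nsmul_eq_mul,
    count_main S n k j hV hS]
  -- final casting
  have h1 : ((n : ℝ) - 1) = (m : ℝ) := by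
    rw [hm, Nat.cast_sub (by omega), Nat.cast_one]
  have hNs : ∑ ℓ ∈ Finset.Icc j k,
        (k.choose ℓ : ℝ) * ((n - k).choose j : ℝ) * (Surj ℓ j : ℝ) * ((k : ℝ) - 1) ^ (k - ℓ)
      = ((∑ ℓ ∈ Icc j k, k.choose ℓ * (n - k).choose j * Surj ℓ j * (k - 1) ^ (k - ℓ) : ℕ) : ℝ) := by
    push_cast [Nat.cast_sub hk1]
    ring_nf
    exact Finset.sum_congr rfl fun _ _ => by ring
  rw [hNs, h1]
  have hmpos : (0 : ℝ) < (m : ℝ) ^ k := by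
    have : 0 < m := by omega
    positivity
  rw [ENNReal.ofReal_mul (le_of_lt (inv_pos.mpr hmpos)), ENNReal.ofReal_natCast,
    ENNReal.ofReal_inv_of_pos hmpos, ENNReal.ofReal_pow (by positivity),
    ENNReal.ofReal_natCast, ENNReal.inv_pow, mul_comm]
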